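/- arXiv:2011.10713 — 5 statements merged into one kernel-verified Lean document; each statement's English description precedes it below -/
import Mathlib

section
/- Let h' be defined by h'(x, s) = β_s⁻¹(h(γ_s(x), rv(s))), where rv(s) = ρ_s(s). Assume that for every s, the maps γ_{rv(s)}, β_{rv(s)}, and ρ_{rv(s)} are identity maps. Then for every s ∈ S and x ∈ X, β_s(h'(x, s)) = h'(γ_s(x), rv(s)); that is, the new controller h' is (β_s, γ_s, rv)-symmetric for every s. -/
theorem stmt3_general {X S U : Type*}
    (h : X → S → U)
    (γ : S → X → X) (ρ : S → S → S) (β : S → U → U) (βinv : S → U → U)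
    (hβright : ∀ s, Function.RightInverse (βinv s) (β s))
    (rv : S → S) (hrv : ∀ s, rv s = ρ s s)
    (hγid : ∀ s, γ (rv s) = id)
    (hβid : ∀ s, β (rv s) = id)
    (hρid : ∀ s, ρ (rv s) = id)
    (h' : X → S → U)
    (hh' : ∀ x s, h' x s = βinv s (h (γ s x) (rv s))) :
    ∀ (s : S) (x : X), β s (h' x s) = h' (γ s x) (rv s) := by
  intro s x
  have hrv_idem : rv (rv s) = rv s := by rw [hrv (rv s), hρid s, id]
  have hβinv_id : ∀ u, βinv (rv s) u = u := fun u => by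
    simpa only [hβid s, id] using hβright (rv s) u
  rw [hh', hh', hβright, hγid, hrv_idem, hβinv_id, id]

/-- Define `h' x s = β_s⁻¹ (h (γ_s x) (rv s))` where `rv s = ρ_s s`.
If `γ_{rv s}`, `β_{rv s}`, `ρ_{rv s}` are identity maps, then
`β_s (h' x s) = h' (γ_s x) (rv s)`, i.e. `h'` is `(β_s, γ_s, rv)`-symmetric. -/
theorem stmt3 {X S U : Type*}
    (h : X → S → U)
    (γ : S → X → X) (ρ : S → S → S) (β : S → U → U) (βinv : S → U → U)
    (hβleft : ∀ s, Function.LeftInverse (βinv s) (β s))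
    (hβright : ∀ s, Function.RightInverse (βinv s) (β s))
    (rv : S → S) (hrv : ∀ s, rv s = ρ s s)
    (hγid : ∀ s, γ (rv s) = id)
    (hβid : ∀ s, β (rv s) = id)
    (hρid : ∀ s, ρ (rv s) = id)
    (h' : X → S → U)
    (hh' : ∀ x s, h' x s = βinv s (h (γ s x) (rv s))) :
    ∀ (s : S) (x : X), β s (h' x s) = h' (γ s x) (rv s) :=
  stmt3_general h γ ρ β βinv hβright rv hrv hγid hβid hρid h' hh'
end

section
/- Suppose the closed-loop system f_c(x, s) = g(x, h(x, s)) is equivariant: there exist β and ρ such that h is (β, γ, ρ)-symmetric and Dγ(x)(g(x, u)) = g(γ(x), β(u)) for all x, u. Then for any solution ξ_c of x' = f_c(x, s) with ξ_c(0) = x₀, the curve t ↦ γ(ξ_c(t)) is a solution of x' = f_c(x, ρ(s)) with initial condition γ(x₀); i.e., γ(ξ_c(x₀, s, t)) = ξ_c(γ(x₀), ρ(s), t) for all t ≥ 0. -/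
/-!
By the chain rule and equivariance, `γ` carries integral curves of the closed loop in mode `s`
to integral curves in mode `ρ s`; uniqueness of solutions then identifies `γ ∘ ξc x₀ s` with
`ξc (γ x₀) (ρ s)`.
-/

theorem HasDerivAt.comp_of_fderiv_apply_eq {E E' : Type*}
    [NormedAddCommGroup E] [NormedSpace ℝ E] [NormedAddCommGroup E'] [NormedSpace ℝ E']
    {F : E → E} {G : E' → E'} {γ : E → E'} {Dγ : E →L[ℝ] E'} {η : ℝ → E} {t : ℝ}
    (hη : HasDerivAt η (F (η t)) t) (hγ : HasFDerivAt γ Dγ (η t))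
    (hFG : Dγ (F (η t)) = G (γ (η t))) :
    HasDerivAt (γ ∘ η) (G (γ (η t))) t :=
  hFG ▸ hγ.comp_hasDerivAt t hη

theorem closedLoop_fderiv_apply_eq {E U S : Type*} [NormedAddCommGroup E] [NormedSpace ℝ E]
    {g : E → U → E} {h : E → S → U} {γ : E → E} {Dγ : E → E →L[ℝ] E} {β : U → U} {ρ : S → S}
    (hg : ∀ x u, Dγ x (g x u) = g (γ x) (β u)) (hh : ∀ x s, β (h x s) = h (γ x) (ρ s))
    (x : E) (s : S) :
    Dγ x (g x (h x s)) = g (γ x) (h (γ x) (ρ s)) := by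
  rw [hg, hh]

/-- If the closed-loop system `f_c x s = g x (h x s)` is equivariant
(`h` is `(β, γ, ρ)`-symmetric and `Dγ x (g x u) = g (γ x) (β u)`), then for the flow
`ξ_c` (the unique solution of `x' = f_c (x, s)`), we have
`γ (ξ_c x₀ s t) = ξ_c (γ x₀) (ρ s) t` for all `t ≥ 0`. -/
theorem stmt5 {n m : ℕ} {S : Type*}
    (g : (Fin n → ℝ) → (Fin m → ℝ) → (Fin n → ℝ))
    (h : (Fin n → ℝ) → S → (Fin m → ℝ))
    (γ : (Fin n → ℝ) → (Fin n → ℝ))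
    (Dγ : (Fin n → ℝ) → ((Fin n → ℝ) →L[ℝ] (Fin n → ℝ)))
    (hγ : ∀ x, HasFDerivAt γ (Dγ x) x)
    (β : (Fin m → ℝ) → (Fin m → ℝ)) (ρ : S → S)
    (hg : ∀ x u, Dγ x (g x u) = g (γ x) (β u))
    (hh : ∀ x s, β (h x s) = h (γ x) (ρ s))
    -- `ξc x₀ s` is a solution of `x' = g (x, h (x, s))` starting at `x₀` ...
    (ξc : (Fin n → ℝ) → S → ℝ → (Fin n → ℝ))
    (hinit : ∀ x₀ s, ξc x₀ s 0 = x₀)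
    (hode : ∀ x₀ s t, 0 ≤ t →
      HasDerivAt (ξc x₀ s) (g (ξc x₀ s t) (h (ξc x₀ s t) s)) t)
    -- ... and it is the unique such solution.
    (huniq : ∀ (x₀ : Fin n → ℝ) (s : S) (η : ℝ → (Fin n → ℝ)),
      η 0 = x₀ → (∀ t, 0 ≤ t → HasDerivAt η (g (η t) (h (η t) s)) t) →
      ∀ t, 0 ≤ t → η t = ξc x₀ s t) :
    ∀ (x₀ : Fin n → ℝ) (s : S) (t : ℝ), 0 ≤ t →
      γ (ξc x₀ s t) = ξc (γ x₀) (ρ s) t := by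
  intro x₀ s t ht
  have hsol : ∀ u, 0 ≤ u → HasDerivAt (γ ∘ ξc x₀ s)
      (g ((γ ∘ ξc x₀ s) u) (h ((γ ∘ ξc x₀ s) u) (ρ s))) u := fun u hu =>
    (hode x₀ s u hu).comp_of_fderiv_apply_eq (F := fun y => g y (h y s))
      (G := fun y => g y (h y (ρ s)))
      (hγ _) (closedLoop_fderiv_apply_eq hg hh _ s)
  exact huniq (γ x₀) (ρ s) (γ ∘ ξc x₀ s) (congrArg γ (hinit x₀ s)) hsol t ht
end

section
/- Let H be a transition system with states X × S, initial set Θ × {s_init}, and transitions given by flows and mode switches, and let H_v be its symmetry abstraction determined by maps {(γ_s, ρ_s)}. Define R ⊆ (X × S) × (X × S_v) by (x, s) R (x_v, s_v) iff x_v = γ_s(x) and s_v = rv(s), where rv(s) = ρ_s(s). If for every reachable abstract mode s_v, Reach_{H_v}(s_v) ∩ O_v(s_v) = ∅, where O_v(s_v) = ⋃_{s : rv(s) = s_v} γ_s(O(s)), then for every concrete mode s, Reach_H(s) ∩ O(s) = ∅. -/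
/-- A transition system: states, initial states, and a transition relation. -/
structure TransSys (σ : Type*) where
  init : Set σ
  step : σ → σ → Prop

/-- Reachability in a transition system. -/
def TransSys.Reachable {σ : Type*} (A : TransSys σ) (a : σ) : Prop :=
  ∃ a₀ ∈ A.init, Relation.ReflTransGen A.step a₀ a

/-- Forward simulation relation. -/
def IsForwardSim {σ τ : Type*} (A : TransSys σ) (B : TransSys τ) (R : σ → τ → Prop) : Prop :=
  (∀ a ∈ A.init, ∃ b ∈ B.init, R a b) ∧
  (∀ a b a', R a b → A.step a a' → ∃ b', B.step b b' ∧ R a' b')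

namespace IsForwardSim

variable {σ τ : Type*} {A : TransSys σ} {B : TransSys τ} {R : σ → τ → Prop}

theorem exists_reachable (hsim : IsForwardSim A B R) {a : σ} (ha : A.Reachable a) :
    ∃ b, B.Reachable b ∧ R a b := by
  obtain ⟨a₀, ha₀, hsteps⟩ := ha
  induction hsteps with
  | refl =>
    obtain ⟨b₀, hb₀, hR⟩ := hsim.1 a₀ ha₀
    exact ⟨b₀, ⟨b₀, hb₀, .refl⟩, hR⟩
  | tail _ hstep ih =>
    obtain ⟨b, ⟨b₀, hb₀, hbsteps⟩, hR⟩ := ih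
    obtain ⟨b', hb', hR'⟩ := hsim.2 _ _ _ hR hstep
    exact ⟨b', ⟨b₀, hb₀, hbsteps.tail hb'⟩, hR'⟩

theorem not_reachable_of_not_reachable (hsim : IsForwardSim A B R) {P : σ → Prop}
    {Q : τ → Prop} (hPQ : ∀ a b, R a b → P a → Q b) (hB : ∀ b, B.Reachable b → ¬ Q b)
    {a : σ} (ha : A.Reachable a) : ¬ P a := fun hPa ↦
  let ⟨b, hb, hR⟩ := hsim.exists_reachable ha
  hB b hb (hPQ a b hR hPa)

end IsForwardSim

theorem stmt6_general {X S Sv : Type*}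
    (γ : S → X → X) (rv : S → Sv)
    (H : TransSys (X × S)) (Hv : TransSys (X × Sv))
    (O : S → Set X)
    (Ov : Sv → Set X)
    (hOv : ∀ sv, Ov sv = ⋃ s ∈ {s : S | rv s = sv}, γ s '' O s)
    (R : X × S → X × Sv → Prop)
    (hRdef : ∀ x s xv sv, R (x, s) (xv, sv) ↔ xv = γ s x ∧ sv = rv s)
    (hsim : IsForwardSim H Hv R)
    (hsafe : ∀ sv : Sv, {x | Hv.Reachable (x, sv)} ∩ Ov sv = ∅) :
    ∀ s : S, {x | H.Reachable (x, s)} ∩ O s = ∅ := by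
  have hunsafe : ∀ a b, R a b → a.1 ∈ O a.2 → b.1 ∈ Ov b.2 := by
    rintro ⟨x, s⟩ ⟨xv, sv⟩ hR hx
    obtain ⟨rfl, rfl⟩ := (hRdef x s xv sv).mp hR
    rw [hOv]
    exact Set.mem_biUnion (show s ∈ {s | rv s = rv s} from rfl) (Set.mem_image_of_mem (γ s) hx)
  have hsafe_abs : ∀ b, Hv.Reachable b → b.1 ∉ Ov b.2 := fun b hb hbO ↦
    (hsafe b.2).subset ⟨hb, hbO⟩
  intro s
  exact Set.eq_empty_of_forall_notMem fun x ⟨hreach, hO⟩ ↦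
    hsim.not_reachable_of_not_reachable hunsafe hsafe_abs hreach hO

/-- Let `H` be the concrete hybrid automaton, viewed as a transition system on
`X × S` with initial set `Θ × {s_init}`, and `H_v` its symmetry abstraction, with
`R (x, s) (x_v, s_v) ↔ x_v = γ_s x ∧ s_v = rv s` a forward simulation from `H` to `H_v`.
If for every abstract mode `s_v`, `Reach_{H_v}(s_v) ∩ O_v(s_v) = ∅`, where
`O_v(s_v) = ⋃_{s : rv s = s_v} γ_s '' O(s)`, then for every concrete mode `s`,
`Reach_H(s) ∩ O(s) = ∅`. -/
theorem stmt6 {X S Sv : Type*}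
    (γ : S → X → X) (rv : S → Sv)
    (Θ : Set X) (sinit : S)
    (H : TransSys (X × S)) (Hv : TransSys (X × Sv))
    (hinit : H.init = Θ ×ˢ ({sinit} : Set S))
    (O : S → Set X)
    (Ov : Sv → Set X)
    (hOv : ∀ sv, Ov sv = ⋃ s ∈ {s : S | rv s = sv}, γ s '' O s)
    (R : X × S → X × Sv → Prop)
    (hRdef : ∀ x s xv sv, R (x, s) (xv, sv) ↔ xv = γ s x ∧ sv = rv s)
    (hsim : IsForwardSim H Hv R)
    (hsafe : ∀ sv : Sv, {x | Hv.Reachable (x, sv)} ∩ Ov sv = ∅) :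
    ∀ s : S, {x | H.Reachable (x, s)} ∩ O s = ∅ :=
  stmt6_general γ rv H Hv O Ov hOv R hRdef hsim hsafe
end

section
/- Soundness of DFS verification with caching: consider the recursive procedure that for each abstract mode computes an over-approximation R_v ⊇ Reach exactly once per uncached initial set, subtracts cached initial sets before recursing on children, and returns safe only if every computed R_v is disjoint from the unsafe set. If the procedure terminates returning safe, then for every mode s_v reachable from the initial mode and every state x reachable in mode s_v, x ∉ O_v(s_v). Formally: given a transition system on modes with per-mode reach operators Post(s_v, I) ⊆ R_v(I) (the over-approximation), if the cached fixed point is reached with all R_v ∩ O_v = ∅, then the exact reachable set avoids O_v. -/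
/-!
Every entry state of a mode that is reachable from `Θ` lies in the cache of that mode: the cache
contains `Θ`, and since `R` over-approximates `post`, the fixed-point condition makes the cache
closed under a flow-then-jump step. Hence every exactly reachable state of mode `v` lies in the
computed reachset `R v (C v)`, which avoids `O v`.
-/

theorem Relation.ReflTransGen.invariant {α : Type*} {r : α → α → Prop} {P : α → Prop}
    (hstep : ∀ a b, P a → r a b → P b) {a b : α} (hab : Relation.ReflTransGen r a b)
    (ha : P a) : P b := by
  induction hab with
  | refl => exact ha
  | tail _ hbc ih => exact hstep _ _ ih hbc

section CachedVerification

variable {X V : Type*} (post : V → X → Set X) (trans : V → V → X → Set X)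

def modeStep (p q : V × X) : Prop :=
  ∃ y ∈ post p.1 p.2, q.2 ∈ trans p.1 q.1 y

variable {post trans} {R : V → Set X → Set X} {C : V → Set X}

theorem mem_cache_of_modeStep (hover : ∀ v, ∀ x ∈ C v, post v x ⊆ R v (C v))
    (hfix : ∀ v v' z, z ∈ R v (C v) → trans v v' z ⊆ C v') {p q : V × X}
    (hp : p.2 ∈ C p.1) (hpq : modeStep post trans p q) : q.2 ∈ C q.1 := by
  obtain ⟨y, hy, hq⟩ := hpq
  exact hfix _ _ y (hover _ _ hp hy) hq

theorem mem_cache_of_reflTransGen (hover : ∀ v, ∀ x ∈ C v, post v x ⊆ R v (C v))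
    (hfix : ∀ v v' z, z ∈ R v (C v) → trans v v' z ⊆ C v') {p q : V × X}
    (hpq : Relation.ReflTransGen (modeStep post trans) p q) (hp : p.2 ∈ C p.1) :
    q.2 ∈ C q.1 :=
  hpq.invariant (P := fun p : V × X ↦ p.2 ∈ C p.1)
    (fun _ _ ↦ mem_cache_of_modeStep hover hfix) hp

end CachedVerification

/-- Soundness of the DFS verification algorithm with caching.
`post v x` is the exact set of states reachable in mode `v` from entry state `x` within the
time bound; `R v I` is the over-approximate reachset computed from initial set `I`
(`computeReachset`); `trans v v' z` is the set of entry states of mode `v'` generated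
(through guard and reset) from a state `z` of mode `v`; `C` is the cache of processed
per-mode initial sets at the fixed point.  If the cache covers the initial set, the fixed
point has been reached (all newly generated initial sets are already cached), and every
computed over-approximate reachset is disjoint from the unsafe set, then the exact
reachable set of every mode avoids the unsafe set. -/
theorem stmt16 {X V : Type*}
    (post : V → X → Set X)
    (R : V → Set X → Set X)
    (trans : V → V → X → Set X)
    (O : V → Set X)
    (v0 : V) (Θ : Set X)
    (C : V → Set X)
    -- `R` over-approximates the exact per-mode reachable states:
    (hover : ∀ v (I : Set X) (x : X), x ∈ I → post v x ⊆ R v I)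
    -- the cache covers the initial set:
    (hinit : Θ ⊆ C v0)
    -- fixed point: initial sets generated from computed reachsets are cached:
    (hfix : ∀ v v' z, z ∈ R v (C v) → trans v v' z ⊆ C v')
    -- the algorithm returned safe: every computed reachset avoids the unsafe set:
    (hsafe : ∀ v, R v (C v) ∩ O v = ∅) :
    -- then the exact reachable set avoids the unsafe set:
    ∀ (v : V) (z : X),
      (∃ x : X, (∃ x₀ ∈ Θ,
          Relation.ReflTransGen
            (fun p q : V × X => ∃ y ∈ post p.1 p.2, q.2 ∈ trans p.1 q.1 y)
            (v0, x₀) (v, x)) ∧ z ∈ post v x) →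
      z ∉ O v := by
  rintro v z ⟨x, ⟨x₀, hx₀, hreach⟩, hz⟩ hzO
  have hcache : ∀ v, ∀ x ∈ C v, post v x ⊆ R v (C v) := fun v ↦ hover v (C v)
  have hx : x ∈ C v :=
    mem_cache_of_reflTransGen (post := post) (trans := trans) hcache hfix hreach (hinit hx₀)
  exact Set.eq_empty_iff_forall_notMem.1 (hsafe v) z ⟨hcache v x hx hz, hzO⟩
end

section
/- Monotonicity of reachability under abstraction: if rv : S → S_v and for each s, γ_s is a bijection on X with γ_s(ξ(x, s, t)) = ξ_v(γ_s(x), rv(s), t) (where ξ_v is the abstract flow), and the abstract initial set and guards contain the γ-images of the concrete ones (Θ_v ⊇ γ_{s_init}(Θ), guard_v((rv(s), rv(s'))) ⊇ γ_s(guard((s,s'))), reset_v ⊇ γ_{s'} ∘ reset ∘ γ_s⁻¹ on the corresponding sets), then for every concrete mode s: γ_s(Reach_H(s)) ⊆ Reach_{H_v}(rv(s)). -/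
/-- One step of a hybrid automaton in the scenario-verification setting: either flow within
the current mode for some nonnegative time, or a discrete transition through a guard with a
reset. -/
def hybridStep {X M : Type*} (flow : X → M → ℝ → X)
    (guard : M × M → Set X) (reset : M × M → X → Set X) :
    (X × M) → (X × M) → Prop := fun p q =>
  (∃ t : ℝ, 0 ≤ t ∧ q.2 = p.2 ∧ q.1 = flow p.1 p.2 t) ∨
  (p.1 ∈ guard (p.2, q.2) ∧ q.1 ∈ reset (p.2, q.2) p.1)

/-- `Reach(s)`: continuous states visited while in mode `s`, across all executions from the
initial set `Θ` in the initial mode `minit`. -/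
def hybridReach {X M : Type*} (flow : X → M → ℝ → X)
    (guard : M × M → Set X) (reset : M × M → X → Set X)
    (Θ : Set X) (minit : M) (s : M) : Set X :=
  {x | ∃ x₀ ∈ Θ, Relation.ReflTransGen (hybridStep flow guard reset) (x₀, minit) (x, s)}

/-! The map `(x, s) ↦ (γ s x, rv s)` sends every step of `H` to a step of `H_v`: flows are
carried to flows by the conjugacy `γ_s ∘ ξ(·, s, t) = ξ_v(γ_s ·, rv s, t)`, and discrete
transitions to discrete transitions by the containments of guards and resets. Hence it maps
executions of `H` to executions of `H_v`, and initial states into `Θ_v`. -/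

theorem hybridStep_map {X M Mv : Type*}
    {flow : X → M → ℝ → X} {flowv : X → Mv → ℝ → X}
    {guard : M × M → Set X} {reset : M × M → X → Set X}
    {guardv : Mv × Mv → Set X} {resetv : Mv × Mv → X → Set X}
    {γ : M → X → X} {rv : M → Mv}
    (hflow : ∀ x s t, γ s (flow x s t) = flowv (γ s x) (rv s) t)
    (hguard : ∀ s s', γ s '' guard (s, s') ⊆ guardv (rv s, rv s'))
    (hreset : ∀ s s' x x', x' ∈ reset (s, s') x → γ s' x' ∈ resetv (rv s, rv s') (γ s x))
    {p q : X × M} (h : hybridStep flow guard reset p q) :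
    hybridStep flowv guardv resetv (γ p.2 p.1, rv p.2) (γ q.2 q.1, rv q.2) := by
  rcases h with ⟨t, ht, hmode, hstate⟩ | ⟨hg, hr⟩
  · exact Or.inl ⟨t, ht, by rw [hmode], by rw [hstate, hmode, hflow]⟩
  · exact Or.inr ⟨hguard _ _ ⟨_, hg, rfl⟩, hreset _ _ _ _ hr⟩

theorem stmt17_general {X S Sv : Type*}
    (ξ : X → S → ℝ → X) (ξv : X → Sv → ℝ → X)
    (γ : S → X → X)
    (rv : S → Sv)
    (hflow : ∀ x s t, γ s (ξ x s t) = ξv (γ s x) (rv s) t)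
    (Θ : Set X) (Θv : Set X) (sinit : S)
    (guard : S × S → Set X) (reset : S × S → X → Set X)
    (guardv : Sv × Sv → Set X) (resetv : Sv × Sv → X → Set X)
    (hΘ : γ sinit '' Θ ⊆ Θv)
    (hguard : ∀ s s', γ s '' guard (s, s') ⊆ guardv (rv s, rv s'))
    (hreset : ∀ s s' x x', x' ∈ reset (s, s') x →
      γ s' x' ∈ resetv (rv s, rv s') (γ s x)) :
    ∀ s : S, γ s '' hybridReach ξ guard reset Θ sinit s ⊆
      hybridReach ξv guardv resetv Θv (rv sinit) (rv s) := by
  rintro s _ ⟨x, ⟨x₀, hx₀, hexec⟩, rfl⟩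
  exact ⟨γ sinit x₀, hΘ ⟨x₀, hx₀, rfl⟩,
    hexec.lift (fun p : X × S => (γ p.2 p.1, rv p.2))
      fun _ _ => hybridStep_map hflow hguard hreset⟩

/-- Monotonicity of reachability under symmetry abstraction.  If each `γ_s`
is a bijection with `γ_s (ξ x s t) = ξ_v (γ_s x) (rv s) t`, and the abstract initial set,
guards, and resets contain the `γ`-images of the concrete ones, then
`γ_s '' Reach_H(s) ⊆ Reach_{H_v}(rv s)` for every concrete mode `s`. -/
theorem stmt17 {X S Sv : Type*}
    (ξ : X → S → ℝ → X) (ξv : X → Sv → ℝ → X)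
    (γ : S → X → X) (hγbij : ∀ s, Function.Bijective (γ s))
    (rv : S → Sv)
    (hflow : ∀ x s t, γ s (ξ x s t) = ξv (γ s x) (rv s) t)
    (Θ : Set X) (Θv : Set X) (sinit : S)
    (guard : S × S → Set X) (reset : S × S → X → Set X)
    (guardv : Sv × Sv → Set X) (resetv : Sv × Sv → X → Set X)
    (hΘ : γ sinit '' Θ ⊆ Θv)
    (hguard : ∀ s s', γ s '' guard (s, s') ⊆ guardv (rv s, rv s'))
    (hreset : ∀ s s' x x', x' ∈ reset (s, s') x →
      γ s' x' ∈ resetv (rv s, rv s') (γ s x)) :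
    ∀ s : S, γ s '' hybridReach ξ guard reset Θ sinit s ⊆
      hybridReach ξv guardv resetv Θv (rv sinit) (rv s) :=
  stmt17_general ξ ξv γ rv hflow Θ Θv sinit guard reset guardv resetv hΘ hguard hreset
end
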